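/- arXiv:2212.12334 — 3 statements merged into one kernel-verified Lean document; each statement's English description precedes it below -/
import Mathlib

section
/- Let ρ be a probability measure on ℝ^{d1} × ℝ^{d2} with ∫∫ (‖x‖₂² + ‖y‖₂²) dρ ≤ K, and suppose E satisfies E(x,y) - Ē_low(y') ≤ C₂(1 + ‖x‖₂² + ‖y‖₂² + ‖y'‖₂²) for all x, y, y', where Ē_low is a lower-bounding function of E. Then for m := ∫ y dρ_Y (the mean of the y-marginal), exp(-α Ē_low(m)) / ∫ exp(-α E(x, m)) dρ_X(x) ≤ exp(α C₂ (1 + 2K)). -/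
/-!
The growth bound with `y = y' = m` gives `-α E(x, m) ≥ -α Ē_low(m) - α C₂ (1 + ‖x‖² + 2‖m‖²)`.
Integrating against `ρ_X` and applying Jensen's inequality to `exp` bounds the partition
function `∫ exp(-α E(x, m)) dρ_X` from below by `exp(-α Ē_low(m) - α C₂ (1 + ∫‖x‖² + 2‖m‖²))`,
and Jensen again gives `‖m‖² ≤ ∫‖y‖² dρ_Y`, so the second moments contribute at most `2K`.
-/

open MeasureTheory

section Jensen

variable {α : Type*} [MeasurableSpace α] {μ : Measure α} [IsProbabilityMeasure μ]

theorem sq_norm_integral_le_integral_sq_norm {E : Type*} [NormedAddCommGroup E]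
    [NormedSpace ℝ E] [CompleteSpace E] {f : α → E} (hf : AEStronglyMeasurable f μ)
    (hf2 : Integrable (fun x => ‖f x‖ ^ 2) μ) :
    ‖∫ x, f x ∂μ‖ ^ 2 ≤ ∫ x, ‖f x‖ ^ 2 ∂μ :=
  (convexOn_univ_norm.pow (fun _ _ => norm_nonneg _) 2).map_integral_le
    (continuous_norm.pow 2).continuousOn isClosed_univ (.of_forall fun _ => Set.mem_univ _)
    (((memLp_two_iff_integrable_sq_norm hf).2 hf2).integrable one_le_two) hf2

theorem exp_integral_le_integral_exp_of_le {ψ G : α → ℝ} (hψ : Integrable ψ μ)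
    (hG : Integrable (fun x => Real.exp (G x)) μ) (hle : ∀ x, ψ x ≤ G x) :
    Real.exp (∫ x, ψ x ∂μ) ≤ ∫ x, Real.exp (G x) ∂μ := by
  have hexpψ : Integrable (fun x => Real.exp (ψ x)) μ :=
    hG.mono (Real.continuous_exp.comp_aestronglyMeasurable hψ.1) (.of_forall fun x => by
      simp only [Real.norm_eq_abs, Real.abs_exp, Real.exp_le_exp, hle x])
  calc Real.exp (∫ x, ψ x ∂μ) ≤ ∫ x, Real.exp (ψ x) ∂μ :=
        convexOn_exp.map_integral_le Real.continuous_exp.continuousOn isClosed_univ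
          (.of_forall fun _ => Set.mem_univ _) hψ hexpψ
    _ ≤ ∫ x, Real.exp (G x) ∂μ :=
        integral_mono hexpψ hG fun x => Real.exp_le_exp.2 (hle x)

end Jensen

theorem exp_sub_mul_integral_norm_sq_le_integral_exp {X : Type*} [NormedAddCommGroup X]
    [MeasurableSpace X] {μ : Measure X} [IsProbabilityMeasure μ] {G : X → ℝ} {a c : ℝ}
    (hG : ∀ x, a - c * ‖x‖ ^ 2 ≤ G x) (hX : Integrable (fun x => ‖x‖ ^ 2) μ)
    (hexp : Integrable (fun x => Real.exp (G x)) μ) :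
    Real.exp (a - c * ∫ x, ‖x‖ ^ 2 ∂μ) ≤ ∫ x, Real.exp (G x) ∂μ := by
  have hJensen := exp_integral_le_integral_exp_of_le (ψ := fun x => a - c * ‖x‖ ^ 2)
    ((integrable_const a).sub (hX.const_mul c)) hexp hG
  rwa [integral_sub (integrable_const a) (hX.const_mul c), integral_const, integral_const_mul,
    probReal_univ, one_smul] at hJensen

section Marginals

variable {X Y : Type*} [NormedAddCommGroup X] [NormedAddCommGroup Y] [MeasurableSpace X]
  [MeasurableSpace Y] {ρ : Measure (X × Y)}

theorem integrable_norm_sq_fst [OpensMeasurableSpace X]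
    (h : Integrable (fun p : X × Y => ‖p.1‖ ^ 2 + ‖p.2‖ ^ 2) ρ) :
    Integrable (fun p : X × Y => ‖p.1‖ ^ 2) ρ :=
  h.mono' (measurable_fst.norm.pow_const 2).aestronglyMeasurable (.of_forall fun p => by
    simp only [norm_pow, norm_norm]
    nlinarith [sq_nonneg ‖p.2‖])

theorem integrable_norm_sq_snd [OpensMeasurableSpace Y]
    (h : Integrable (fun p : X × Y => ‖p.1‖ ^ 2 + ‖p.2‖ ^ 2) ρ) :
    Integrable (fun p : X × Y => ‖p.2‖ ^ 2) ρ :=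
  h.mono' (measurable_snd.norm.pow_const 2).aestronglyMeasurable (.of_forall fun p => by
    simp only [norm_pow, norm_norm]
    nlinarith [sq_nonneg ‖p.1‖])

theorem integrable_norm_sq_map_fst [OpensMeasurableSpace X]
    (h : Integrable (fun p : X × Y => ‖p.1‖ ^ 2 + ‖p.2‖ ^ 2) ρ) :
    Integrable (fun x => ‖x‖ ^ 2) (ρ.map Prod.fst) :=
  (integrable_map_measure (by fun_prop) (by fun_prop)).2 (integrable_norm_sq_fst h)

theorem integrable_norm_sq_map_snd [OpensMeasurableSpace Y]
    (h : Integrable (fun p : X × Y => ‖p.1‖ ^ 2 + ‖p.2‖ ^ 2) ρ) :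
    Integrable (fun y => ‖y‖ ^ 2) (ρ.map Prod.snd) :=
  (integrable_map_measure (by fun_prop) (by fun_prop)).2 (integrable_norm_sq_snd h)

theorem integral_norm_sq_map_fst_add_map_snd [OpensMeasurableSpace X] [OpensMeasurableSpace Y]
    (h : Integrable (fun p : X × Y => ‖p.1‖ ^ 2 + ‖p.2‖ ^ 2) ρ) :
    ∫ x, ‖x‖ ^ 2 ∂(ρ.map Prod.fst) + ∫ y, ‖y‖ ^ 2 ∂(ρ.map Prod.snd) =
      ∫ p, (‖p.1‖ ^ 2 + ‖p.2‖ ^ 2) ∂ρ := by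
  rw [integral_map (by fun_prop) (by fun_prop), integral_map (by fun_prop) (by fun_prop),
    integral_add (integrable_norm_sq_fst h) (integrable_norm_sq_snd h)]

end Marginals

theorem stmt3_general (d1 d2 : ℕ) (α C₂ K : ℝ) (hα : 0 < α) (hC₂ : 0 < C₂)
    (ρ : Measure (EuclideanSpace ℝ (Fin d1) × EuclideanSpace ℝ (Fin d2)))
    [IsProbabilityMeasure ρ]
    (E : EuclideanSpace ℝ (Fin d1) → EuclideanSpace ℝ (Fin d2) → ℝ)
    (Elow : EuclideanSpace ℝ (Fin d2) → ℝ)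
    (hgrowth : ∀ x y y', E x y - Elow y' ≤ C₂ * (1 + ‖x‖ ^ 2 + ‖y‖ ^ 2 + ‖y'‖ ^ 2))
    (hmom : ∫ p, (‖p.1‖ ^ 2 + ‖p.2‖ ^ 2) ∂ρ ≤ K)
    (hmomint : Integrable (fun p => ‖p.1‖ ^ 2 + ‖p.2‖ ^ 2) ρ)
    (m : EuclideanSpace ℝ (Fin d2))
    (hm : m = ∫ y, y ∂(ρ.map Prod.snd)) :
    Real.exp (-α * Elow m) / (∫ x, Real.exp (-α * E x m) ∂(ρ.map Prod.fst)) ≤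
      Real.exp (α * C₂ * (1 + 2 * K)) := by
  have : IsProbabilityMeasure (ρ.map Prod.fst) := Measure.isProbabilityMeasure_map (by fun_prop)
  have : IsProbabilityMeasure (ρ.map Prod.snd) := Measure.isProbabilityMeasure_map (by fun_prop)
  have hX := integrable_norm_sq_map_fst hmomint
  have hX_nonneg : 0 ≤ ∫ x, ‖x‖ ^ 2 ∂(ρ.map Prod.fst) := integral_nonneg fun _ => by positivity
  have hm_sq : ‖m‖ ^ 2 ≤ ∫ y, ‖y‖ ^ 2 ∂(ρ.map Prod.snd) :=
    hm ▸ sq_norm_integral_le_integral_sq_norm aestronglyMeasurable_id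
      (integrable_norm_sq_map_snd hmomint)
  have hsplit := integral_norm_sq_map_fst_add_map_snd hmomint
  by_cases hD : Integrable (fun x => Real.exp (-α * E x m)) (ρ.map Prod.fst)
  swap
  · rw [integral_undef hD, div_zero]
    positivity
  have hZ := exp_sub_mul_integral_norm_sq_le_integral_exp
    (a := -α * Elow m - α * C₂ * (1 + 2 * ‖m‖ ^ 2)) (c := α * C₂) (fun x => by
      nlinarith [mul_le_mul_of_nonneg_left (hgrowth x m m) hα.le]) hX hD
  have hexponent : -α * Elow m - α * C₂ * (1 + 2 * K) ≤
      -α * Elow m - α * C₂ * (1 + 2 * ‖m‖ ^ 2) - α * C₂ * ∫ x, ‖x‖ ^ 2 ∂(ρ.map Prod.fst) := by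
    have : 0 ≤ α * C₂ := by positivity
    nlinarith
  rw [div_le_iff₀ ((Real.exp_pos _).trans_le hZ)]
  calc Real.exp (-α * Elow m)
      = Real.exp (α * C₂ * (1 + 2 * K)) * Real.exp (-α * Elow m - α * C₂ * (1 + 2 * K)) := by
        rw [← Real.exp_add]; ring_nf
    _ ≤ _ := by
        gcongr
        exact (Real.exp_le_exp.2 hexponent).trans hZ

theorem stmt3 (d1 d2 : ℕ) (α C₂ K : ℝ) (hα : 0 < α) (hC₂ : 0 < C₂) (hK : 0 < K)
    (ρ : Measure (EuclideanSpace ℝ (Fin d1) × EuclideanSpace ℝ (Fin d2)))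
    [IsProbabilityMeasure ρ]
    (E : EuclideanSpace ℝ (Fin d1) → EuclideanSpace ℝ (Fin d2) → ℝ)
    (Elow : EuclideanSpace ℝ (Fin d2) → ℝ)
    (hlow : ∀ x y, Elow y ≤ E x y)
    (hgrowth : ∀ x y y', E x y - Elow y' ≤ C₂ * (1 + ‖x‖ ^ 2 + ‖y‖ ^ 2 + ‖y'‖ ^ 2))
    (hmom : ∫ p, (‖p.1‖ ^ 2 + ‖p.2‖ ^ 2) ∂ρ ≤ K)
    (hmomint : Integrable (fun p => ‖p.1‖ ^ 2 + ‖p.2‖ ^ 2) ρ)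
    (m : EuclideanSpace ℝ (Fin d2))
    (hm : m = ∫ y, y ∂(ρ.map Prod.snd)) :
    Real.exp (-α * Elow m) / (∫ x, Real.exp (-α * E x m) ∂(ρ.map Prod.fst)) ≤
      Real.exp (α * C₂ * (1 + 2 * K)) :=
  stmt3_general d1 d2 α C₂ K hα hC₂ ρ E Elow hgrowth hmom hmomint m hm
end

section
/- Let X̄ be a square-integrable random variable in ℝ^{d1} with law ρ_X, let ȳ ∈ ℝ^{d2} be fixed, and define the consensus point x_α = E[X̄ exp(-α E(X̄, ȳ))] / E[exp(-α E(X̄, ȳ))]. Suppose Ē_low(ȳ) ≤ E(x, ȳ) for all x, for a function Ē_low. Then E‖X̄ - x_α‖₂² ≤ 4 Var(X̄) / M, where Var(X̄) = E‖X̄ - EX̄‖₂² and M := E[exp(-α E(X̄, ȳ))] · e^{α Ē_low(ȳ)} ∈ (0,1]. -/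
/-!
With `w = exp (-α E(·, ȳ))` and `m = 𝔼 X̄`, the point `x_α - m` is the `w`-weighted average of
`X̄ - m`, so Cauchy–Schwarz (Jensen for the weighted average) gives
`‖x_α - m‖² ≤ (∫ w ‖X̄ - m‖²) / ∫ w`. Since `w ≤ exp (-α Ē_low(ȳ))` pointwise, the right-hand
side is at most `Var(X̄) / M`, and the same bound integrated gives `M ≤ 1`. Finally
`‖X̄ - x_α‖² ≤ 2 ‖X̄ - m‖² + 2 ‖m - x_α‖²` and `Var(X̄) ≤ Var(X̄) / M`.
-/

open MeasureTheory

section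

variable {Ω : Type*} [MeasurableSpace Ω] {μ : Measure Ω}

theorem sq_integral_mul_le_integral_mul_integral_mul_sq {w f : Ω → ℝ} (hw : 0 ≤ w)
    (hf : 0 ≤ f) (hw_int : Integrable w μ) (hwf_int : Integrable (fun ω => w ω * f ω ^ 2) μ) :
    (∫ ω, w ω * f ω ∂μ) ^ 2 ≤ (∫ ω, w ω ∂μ) * ∫ ω, w ω * f ω ^ 2 ∂μ := by
  have hwf : 0 ≤ fun ω => w ω * f ω ^ 2 := fun ω => mul_nonneg (hw ω) (sq_nonneg _)
  have hsqrt_mul (ω : Ω) : √(w ω * f ω ^ 2) = √(w ω) * f ω := by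
    rw [Real.sqrt_mul (hw ω), Real.sqrt_sq (hf ω)]
  have hmemLp_sqrt {g : Ω → ℝ} (hg : Integrable g μ) (hg_nonneg : 0 ≤ g) :
      MemLp (fun ω => √(g ω)) (ENNReal.ofReal 2) μ := by
    rw [ENNReal.ofReal_ofNat]
    refine (memLp_two_iff_integrable_sq
      (Real.continuous_sqrt.comp_aestronglyMeasurable hg.aestronglyMeasurable)).2 ?_
    simpa only [Real.sq_sqrt (hg_nonneg _)] using hg
  have holder := integral_mul_le_Lp_mul_Lq_of_nonneg Real.HolderConjugate.two_two
    (.of_forall fun ω => Real.sqrt_nonneg (w ω))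
    (.of_forall fun ω => Real.sqrt_nonneg (w ω * f ω ^ 2))
    (hmemLp_sqrt hw_int hw) (hmemLp_sqrt hwf_int hwf)
  simp only [hsqrt_mul, ← mul_assoc, Real.mul_self_sqrt (hw _), Real.rpow_two, mul_pow,
    Real.sq_sqrt (hw _)] at holder
  have hI : 0 ≤ ∫ ω, w ω * f ω ∂μ := integral_nonneg fun ω => mul_nonneg (hw ω) (hf ω)
  calc (∫ ω, w ω * f ω ∂μ) ^ 2
      ≤ ((∫ ω, w ω ∂μ) ^ (1 / 2 : ℝ) * (∫ ω, w ω * f ω ^ 2 ∂μ) ^ (1 / 2 : ℝ)) ^ 2 := by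
        gcongr
    _ = (∫ ω, w ω ∂μ) * ∫ ω, w ω * f ω ^ 2 ∂μ := by
        rw [mul_pow, ← Real.sqrt_eq_rpow, ← Real.sqrt_eq_rpow, Real.sq_sqrt (integral_nonneg hw),
          Real.sq_sqrt (integral_nonneg hwf)]

variable {F : Type*} [NormedAddCommGroup F]

theorem integral_norm_sub_sq_le [IsProbabilityMeasure μ] {X : Ω → F} (hX : MemLp X 2 μ)
    (a b : F) :
    ∫ ω, ‖X ω - a‖ ^ 2 ∂μ ≤ 2 * ∫ ω, ‖X ω - b‖ ^ 2 ∂μ + 2 * ‖b - a‖ ^ 2 := by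
  have hXb_int : Integrable (fun ω => ‖X ω - b‖ ^ 2) μ :=
    (hX.sub (memLp_const b)).integrable_norm_pow two_ne_zero
  have hpt (ω : Ω) : ‖X ω - a‖ ^ 2 ≤ 2 * ‖X ω - b‖ ^ 2 + 2 * ‖b - a‖ ^ 2 := by
    calc ‖X ω - a‖ ^ 2 ≤ (‖X ω - b‖ + ‖b - a‖) ^ 2 := by
          gcongr
          exact norm_sub_le_norm_sub_add_norm_sub _ _ _
      _ ≤ 2 * ‖X ω - b‖ ^ 2 + 2 * ‖b - a‖ ^ 2 := add_sq_le.trans_eq (mul_add _ _ _)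
  calc ∫ ω, ‖X ω - a‖ ^ 2 ∂μ ≤ ∫ ω, (2 * ‖X ω - b‖ ^ 2 + 2 * ‖b - a‖ ^ 2) ∂μ :=
        integral_mono_of_nonneg (.of_forall fun ω => by positivity)
          ((hXb_int.const_mul 2).add (integrable_const _)) (.of_forall hpt)
    _ = 2 * ∫ ω, ‖X ω - b‖ ^ 2 ∂μ + 2 * ‖b - a‖ ^ 2 := by
        rw [integral_add (hXb_int.const_mul 2) (integrable_const _), integral_const_mul,
          integral_const, probReal_univ, one_smul]

theorem norm_weighted_mean_sub_sq_le [NormedSpace ℝ F] [CompleteSpace F] {w : Ω → ℝ}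
    {X : Ω → F} (c : F) (hw : 0 ≤ w) (hw_int : Integrable w μ)
    (hwX_int : Integrable (fun ω => w ω • X ω) μ)
    (hwX2_int : Integrable (fun ω => w ω * ‖X ω - c‖ ^ 2) μ) (hZ : 0 < ∫ ω, w ω ∂μ) :
    ‖(∫ ω, w ω ∂μ)⁻¹ • (∫ ω, w ω • X ω ∂μ) - c‖ ^ 2
      ≤ (∫ ω, w ω * ‖X ω - c‖ ^ 2 ∂μ) / ∫ ω, w ω ∂μ := by
  set Z := ∫ ω, w ω ∂μ
  have hcentre : Z⁻¹ • (∫ ω, w ω • X ω ∂μ) - c = Z⁻¹ • ∫ ω, w ω • (X ω - c) ∂μ := by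
    simp only [smul_sub]
    rw [integral_sub hwX_int (hw_int.smul_const c), integral_smul_const, smul_sub, smul_smul,
      inv_mul_cancel₀ hZ.ne', one_smul]
  have hnorm : ‖∫ ω, w ω • (X ω - c) ∂μ‖ ≤ ∫ ω, w ω * ‖X ω - c‖ ∂μ := by
    refine (norm_integral_le_integral_norm _).trans_eq
      (integral_congr_ae (.of_forall fun ω => ?_))
    simp only [norm_smul, Real.norm_of_nonneg (hw ω)]
  have hCS := sq_integral_mul_le_integral_mul_integral_mul_sq hw
    (fun ω => norm_nonneg (X ω - c)) hw_int hwX2_int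
  rw [hcentre, norm_smul, Real.norm_of_nonneg (inv_nonneg.2 hZ.le), mul_pow]
  calc Z⁻¹ ^ 2 * ‖∫ ω, w ω • (X ω - c) ∂μ‖ ^ 2
      ≤ Z⁻¹ ^ 2 * (Z * ∫ ω, w ω * ‖X ω - c‖ ^ 2 ∂μ) := by
        gcongr
        exact (pow_le_pow_left₀ (norm_nonneg _) hnorm 2).trans hCS
    _ = (∫ ω, w ω * ‖X ω - c‖ ^ 2 ∂μ) / Z := by field_simp

end

theorem stmt7_general (d1 d2 : ℕ) {Ω : Type*} [MeasurableSpace Ω] (P : Measure Ω)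
    [IsProbabilityMeasure P] (α : ℝ) (hα : 0 < α)
    (E : EuclideanSpace ℝ (Fin d1) → EuclideanSpace ℝ (Fin d2) → ℝ)
    (Elow : EuclideanSpace ℝ (Fin d2) → ℝ)
    (X : Ω → EuclideanSpace ℝ (Fin d1)) (ybar : EuclideanSpace ℝ (Fin d2))
    (hX2 : MemLp X 2 P)
    (hlow : ∀ x, Elow ybar ≤ E x ybar)
    (hwint : Integrable (fun ω => Real.exp (-α * E (X ω) ybar)) P)
    (hwXint : Integrable (fun ω => Real.exp (-α * E (X ω) ybar) • X ω) P)
    (hint2 : Integrable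
      (fun ω => Real.exp (-α * E (X ω) ybar) * ‖X ω - (∫ ω', X ω' ∂P)‖ ^ 2) P)
    (xα : EuclideanSpace ℝ (Fin d1))
    (hxα : xα = (∫ ω, Real.exp (-α * E (X ω) ybar) ∂P)⁻¹ •
      ∫ ω, Real.exp (-α * E (X ω) ybar) • X ω ∂P)
    (M : ℝ)
    (hM : M = (∫ ω, Real.exp (-α * E (X ω) ybar) ∂P) * Real.exp (α * Elow ybar)) :
    0 < M ∧ M ≤ 1 ∧
      (∫ ω, ‖X ω - xα‖ ^ 2 ∂P) ≤ 4 * (∫ ω, ‖X ω - (∫ ω', X ω' ∂P)‖ ^ 2 ∂P) / M := by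
  set w := fun ω => Real.exp (-α * E (X ω) ybar) with hw
  set Z := ∫ ω, w ω ∂P
  set m := ∫ ω, X ω ∂P
  set V := ∫ ω, ‖X ω - m‖ ^ 2 ∂P
  set K := Real.exp (-α * Elow ybar)
  have hw_le (ω : Ω) : w ω ≤ K := by
    simp only [hw, K, Real.exp_le_exp, neg_mul, neg_le_neg_iff]
    exact mul_le_mul_of_nonneg_left (hlow (X ω)) hα.le
  have hZ : 0 < Z := integral_exp_pos hwint
  have hMK : M = Z / K := by rw [hM, div_eq_mul_inv, ← Real.exp_neg, neg_mul, neg_neg]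
  have hM_pos : 0 < M := by rw [hMK]; positivity
  have hM_le : M ≤ 1 := by
    rw [hMK, div_le_one (Real.exp_pos _ : 0 < K)]
    exact (integral_mono hwint (integrable_const K) hw_le).trans_eq (by simp [K])
  have hdev : ‖xα - m‖ ^ 2 ≤ V / M := by
    have hXm_int : Integrable (fun ω => ‖X ω - m‖ ^ 2) P :=
      (hX2.sub (memLp_const m)).integrable_norm_pow two_ne_zero
    calc ‖xα - m‖ ^ 2 ≤ (∫ ω, w ω * ‖X ω - m‖ ^ 2 ∂P) / Z := hxα ▸
          norm_weighted_mean_sub_sq_le m (fun ω => (Real.exp_pos _).le) hwint hwXint hint2 hZ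
      _ ≤ K * V / Z := by
          gcongr
          rw [← integral_const_mul]
          exact integral_mono hint2 (hXm_int.const_mul K)
            fun ω => mul_le_mul_of_nonneg_right (hw_le ω) (sq_nonneg _)
      _ = V / M := by rw [hMK]; field_simp
  have hV : 0 ≤ V := integral_nonneg fun ω => sq_nonneg _
  refine ⟨hM_pos, hM_le, ?_⟩
  calc ∫ ω, ‖X ω - xα‖ ^ 2 ∂P ≤ 2 * V + 2 * ‖m - xα‖ ^ 2 := integral_norm_sub_sq_le hX2 xα m
    _ ≤ 2 * (V / M) + 2 * (V / M) := by
        rw [norm_sub_rev]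
        gcongr
        exact le_div_self hV hM_pos hM_le
    _ = 4 * V / M := by ring

theorem stmt7 (d1 d2 : ℕ) {Ω : Type*} [MeasurableSpace Ω] (P : Measure Ω)
    [IsProbabilityMeasure P] (α : ℝ) (hα : 0 < α)
    (E : EuclideanSpace ℝ (Fin d1) → EuclideanSpace ℝ (Fin d2) → ℝ)
    (Elow : EuclideanSpace ℝ (Fin d2) → ℝ)
    (X : Ω → EuclideanSpace ℝ (Fin d1)) (ybar : EuclideanSpace ℝ (Fin d2))
    (hX : Measurable X) (hX2 : MemLp X 2 P)
    (hlow : ∀ x, Elow ybar ≤ E x ybar)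
    (hwint : Integrable (fun ω => Real.exp (-α * E (X ω) ybar)) P)
    (hwXint : Integrable (fun ω => Real.exp (-α * E (X ω) ybar) • X ω) P)
    (hint2 : Integrable
      (fun ω => Real.exp (-α * E (X ω) ybar) * ‖X ω - (∫ ω', X ω' ∂P)‖ ^ 2) P)
    (xα : EuclideanSpace ℝ (Fin d1))
    (hxα : xα = (∫ ω, Real.exp (-α * E (X ω) ybar) ∂P)⁻¹ •
      ∫ ω, Real.exp (-α * E (X ω) ybar) • X ω ∂P)
    (M : ℝ)
    (hM : M = (∫ ω, Real.exp (-α * E (X ω) ybar) ∂P) * Real.exp (α * Elow ybar)) :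
    0 < M ∧ M ≤ 1 ∧
      (∫ ω, ‖X ω - xα‖ ^ 2 ∂P) ≤ 4 * (∫ ω, ‖X ω - (∫ ω', X ω' ∂P)‖ ^ 2 ∂P) / M :=
  stmt7_general d1 d2 P α hα E Elow X ybar hX2 hlow hwint hwXint hint2 xα hxα M hM
end

section
/- Under the same setup, the deterministic distance of the mean to the consensus point satisfies ‖E X̄ - x_α‖₂² ≤ Var(X̄) / M, with M as above. -/
/-!
With `w = exp (-α E(X, ȳ))` and `Z = E[w]`, the difference `E X - x_α` equals
`Z⁻¹ E[w (E X - X)]`, so Cauchy–Schwarz (Jensen for `‖·‖²` under the tilted law) bounds its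
square by `Z⁻¹ E[w ‖X - E X‖²]`. Since `w ≤ exp (-α Ē_low(ȳ))` pointwise, the weighted second
moment is at most `exp (-α Ē_low(ȳ)) Var X`.
-/

open MeasureTheory

section WeightedCauchySchwarz

variable {Ω : Type*} [MeasurableSpace Ω] {μ : Measure Ω}

theorem sq_integral_mul_le_integral_mul_integral_mul_sq_s8 {w g : Ω → ℝ}
    (hw : 0 ≤ᵐ[μ] w) (hg : 0 ≤ᵐ[μ] g) (hg_meas : AEStronglyMeasurable g μ)
    (hwi : Integrable w μ) (hwg : Integrable (fun x => w x * g x ^ 2) μ) :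
    (∫ x, w x * g x ∂μ) ^ 2 ≤ (∫ x, w x ∂μ) * ∫ x, w x * g x ^ 2 ∂μ := by
  have hsqrt_meas : AEStronglyMeasurable (fun x => √(w x)) μ :=
    Real.continuous_sqrt.comp_aestronglyMeasurable hwi.1
  have hsqrt : MemLp (fun x => √(w x)) (ENNReal.ofReal 2) μ := by
    rw [ENNReal.ofReal_ofNat, memLp_two_iff_integrable_sq hsqrt_meas]
    refine hwi.congr ?_
    filter_upwards [hw] with x hx using (Real.sq_sqrt hx).symm
  have hsqrt_g : MemLp (fun x => √(w x) * g x) (ENNReal.ofReal 2) μ := by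
    rw [ENNReal.ofReal_ofNat]
    refine (memLp_two_iff_integrable_sq (hsqrt_meas.mul hg_meas)).2 (hwg.congr ?_)
    filter_upwards [hw] with x hx
    rw [Pi.mul_apply, mul_pow, Real.sq_sqrt hx]
  have holder := integral_mul_le_Lp_mul_Lq_of_nonneg Real.HolderConjugate.two_two
    (Filter.Eventually.of_forall fun x => Real.sqrt_nonneg (w x))
    (by filter_upwards [hg] with x hx using mul_nonneg (Real.sqrt_nonneg _) hx) hsqrt hsqrt_g
  have hlhs : ∫ x, √(w x) * (√(w x) * g x) ∂μ = ∫ x, w x * g x ∂μ := by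
    refine integral_congr_ae ?_
    filter_upwards [hw] with x hx
    rw [← mul_assoc, Real.mul_self_sqrt hx]
  have hw2 : ∫ x, √(w x) ^ (2 : ℝ) ∂μ = ∫ x, w x ∂μ := by
    refine integral_congr_ae ?_
    filter_upwards [hw] with x hx
    rw [Real.rpow_two, Real.sq_sqrt hx]
  have hwg2 : ∫ x, (√(w x) * g x) ^ (2 : ℝ) ∂μ = ∫ x, w x * g x ^ 2 ∂μ := by
    refine integral_congr_ae ?_
    filter_upwards [hw] with x hx
    rw [Real.rpow_two, mul_pow, Real.sq_sqrt hx]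
  have hwg2_nonneg : 0 ≤ ∫ x, w x * g x ^ 2 ∂μ :=
    integral_nonneg_of_ae (by filter_upwards [hw] with x hx using mul_nonneg hx (sq_nonneg _))
  rw [hlhs, hw2, hwg2, ← Real.sqrt_eq_rpow, ← Real.sqrt_eq_rpow,
    ← Real.sqrt_mul' _ hwg2_nonneg] at holder
  calc (∫ x, w x * g x ∂μ) ^ 2
      ≤ (√((∫ x, w x ∂μ) * ∫ x, w x * g x ^ 2 ∂μ)) ^ 2 := by
        gcongr
        exact integral_nonneg_of_ae
          (by filter_upwards [hw, hg] with x hx hgx using mul_nonneg hx hgx)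
    _ = (∫ x, w x ∂μ) * ∫ x, w x * g x ^ 2 ∂μ :=
        Real.sq_sqrt (mul_nonneg (integral_nonneg_of_ae hw) hwg2_nonneg)

variable {F : Type*} [NormedAddCommGroup F] [NormedSpace ℝ F]

theorem sq_norm_integral_smul_le {w : Ω → ℝ} {f : Ω → F}
    (hw : 0 ≤ᵐ[μ] w) (hf : AEStronglyMeasurable f μ) (hwi : Integrable w μ)
    (hwf : Integrable (fun x => w x * ‖f x‖ ^ 2) μ) :
    ‖∫ x, w x • f x ∂μ‖ ^ 2 ≤ (∫ x, w x ∂μ) * ∫ x, w x * ‖f x‖ ^ 2 ∂μ := by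
  have hnorm : ‖∫ x, w x • f x ∂μ‖ ≤ ∫ x, w x * ‖f x‖ ∂μ := by
    refine (norm_integral_le_integral_norm _).trans_eq (integral_congr_ae ?_)
    filter_upwards [hw] with x hx
    rw [norm_smul, Real.norm_of_nonneg hx]
  calc ‖∫ x, w x • f x ∂μ‖ ^ 2 ≤ (∫ x, w x * ‖f x‖ ∂μ) ^ 2 := by gcongr
    _ ≤ _ := sq_integral_mul_le_integral_mul_integral_mul_sq_s8 hw
        (Filter.Eventually.of_forall fun x => norm_nonneg (f x)) hf.norm hwi hwf

theorem sq_norm_sub_normalized_integral_smul_le [CompleteSpace F] {w : Ω → ℝ} {f : Ω → F} (c : F)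
    (hw : 0 ≤ᵐ[μ] w) (hf : AEStronglyMeasurable f μ) (hwi : Integrable w μ)
    (hwf : Integrable (fun x => w x • f x) μ)
    (hwf2 : Integrable (fun x => w x * ‖f x - c‖ ^ 2) μ) (hZ : 0 < ∫ x, w x ∂μ) :
    ‖c - (∫ x, w x ∂μ)⁻¹ • ∫ x, w x • f x ∂μ‖ ^ 2 ≤
      (∫ x, w x ∂μ)⁻¹ * ∫ x, w x * ‖f x - c‖ ^ 2 ∂μ := by
  set Z := ∫ x, w x ∂μ
  have hcentre : c - Z⁻¹ • ∫ x, w x • f x ∂μ = Z⁻¹ • ∫ x, w x • (c - f x) ∂μ := by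
    simp only [smul_sub]
    rw [integral_sub (hwi.smul_const c) hwf, integral_smul_const, smul_sub, smul_smul,
      inv_mul_cancel₀ hZ.ne', one_smul]
  have hwf2' : Integrable (fun x => w x * ‖c - f x‖ ^ 2) μ := by
    simpa only [norm_sub_rev] using hwf2
  calc ‖c - Z⁻¹ • ∫ x, w x • f x ∂μ‖ ^ 2 = Z⁻¹ ^ 2 * ‖∫ x, w x • (c - f x) ∂μ‖ ^ 2 := by
        rw [hcentre, norm_smul, mul_pow, Real.norm_of_nonneg (inv_nonneg.2 hZ.le)]
    _ ≤ Z⁻¹ ^ 2 * (Z * ∫ x, w x * ‖c - f x‖ ^ 2 ∂μ) := by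
        gcongr
        exact sq_norm_integral_smul_le hw (aestronglyMeasurable_const.sub hf) hwi hwf2'
    _ = Z⁻¹ * ∫ x, w x * ‖f x - c‖ ^ 2 ∂μ := by
        simp only [norm_sub_rev c]
        field_simp

end WeightedCauchySchwarz

theorem stmt8_general (d1 d2 : ℕ) {Ω : Type*} [MeasurableSpace Ω] (P : Measure Ω)
    [IsProbabilityMeasure P] (α : ℝ) (hα : 0 < α)
    (E : EuclideanSpace ℝ (Fin d1) → EuclideanSpace ℝ (Fin d2) → ℝ)
    (Elow : EuclideanSpace ℝ (Fin d2) → ℝ)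
    (X : Ω → EuclideanSpace ℝ (Fin d1)) (ybar : EuclideanSpace ℝ (Fin d2))
    (hX2 : MemLp X 2 P)
    (hlow : ∀ x, Elow ybar ≤ E x ybar)
    (hwint : Integrable (fun ω => Real.exp (-α * E (X ω) ybar)) P)
    (xα : EuclideanSpace ℝ (Fin d1))
    (hxα : xα = (∫ ω, Real.exp (-α * E (X ω) ybar) ∂P)⁻¹ •
      ∫ ω, Real.exp (-α * E (X ω) ybar) • X ω ∂P)
    (M : ℝ)
    (hM : M = (∫ ω, Real.exp (-α * E (X ω) ybar) ∂P) * Real.exp (α * Elow ybar)) :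
    ‖(∫ ω, X ω ∂P) - xα‖ ^ 2 ≤ (∫ ω, ‖X ω - (∫ ω', X ω' ∂P)‖ ^ 2 ∂P) / M := by
  set w := fun ω => Real.exp (-α * E (X ω) ybar)
  set m := ∫ ω, X ω ∂P
  have hw_le : ∀ ω, w ω ≤ Real.exp (-α * Elow ybar) := fun ω =>
    Real.exp_le_exp.2 (by nlinarith [hlow (X ω)])
  have hw_bdd : ∀ᵐ ω ∂P, ‖w ω‖ ≤ Real.exp (-α * Elow ybar) := Filter.Eventually.of_forall
    fun ω => (Real.norm_of_nonneg (Real.exp_nonneg _)).trans_le (hw_le ω)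
  have hdev : Integrable (fun ω => ‖X ω - m‖ ^ 2) P :=
    (hX2.sub (memLp_const m)).integrable_norm_pow two_ne_zero
  have hwdev : Integrable (fun ω => w ω * ‖X ω - m‖ ^ 2) P :=
    hdev.bdd_mul hwint.1 hw_bdd
  have hZ : 0 < ∫ ω, w ω ∂P := integral_exp_pos hwint
  calc ‖m - xα‖ ^ 2 ≤ (∫ ω, w ω ∂P)⁻¹ * ∫ ω, w ω * ‖X ω - m‖ ^ 2 ∂P := by
        rw [hxα]
        exact sq_norm_sub_normalized_integral_smul_le m
          (Filter.Eventually.of_forall fun ω => (Real.exp_pos _).le) hX2.1 hwint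
          ((hX2.integrable one_le_two).bdd_smul _ hwint.1 hw_bdd) hwdev hZ
    _ ≤ (∫ ω, w ω ∂P)⁻¹ * (Real.exp (-α * Elow ybar) * ∫ ω, ‖X ω - m‖ ^ 2 ∂P) := by
        refine mul_le_mul_of_nonneg_left ?_ (inv_nonneg.2 hZ.le)
        rw [← integral_const_mul]
        exact integral_mono hwdev (hdev.const_mul _) fun ω =>
          mul_le_mul_of_nonneg_right (hw_le ω) (sq_nonneg _)
    _ = (∫ ω, ‖X ω - m‖ ^ 2 ∂P) / M := by
        rw [hM, neg_mul, Real.exp_neg]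
        field_simp

theorem stmt8 (d1 d2 : ℕ) {Ω : Type*} [MeasurableSpace Ω] (P : Measure Ω)
    [IsProbabilityMeasure P] (α : ℝ) (hα : 0 < α)
    (E : EuclideanSpace ℝ (Fin d1) → EuclideanSpace ℝ (Fin d2) → ℝ)
    (Elow : EuclideanSpace ℝ (Fin d2) → ℝ)
    (X : Ω → EuclideanSpace ℝ (Fin d1)) (ybar : EuclideanSpace ℝ (Fin d2))
    (hX : Measurable X) (hX2 : MemLp X 2 P)
    (hlow : ∀ x, Elow ybar ≤ E x ybar)
    (hwint : Integrable (fun ω => Real.exp (-α * E (X ω) ybar)) P)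
    (hwXint : Integrable (fun ω => Real.exp (-α * E (X ω) ybar) • X ω) P)
    (hint2 : Integrable
      (fun ω => Real.exp (-α * E (X ω) ybar) * ‖X ω - (∫ ω', X ω' ∂P)‖ ^ 2) P)
    (xα : EuclideanSpace ℝ (Fin d1))
    (hxα : xα = (∫ ω, Real.exp (-α * E (X ω) ybar) ∂P)⁻¹ •
      ∫ ω, Real.exp (-α * E (X ω) ybar) • X ω ∂P)
    (M : ℝ)
    (hM : M = (∫ ω, Real.exp (-α * E (X ω) ybar) ∂P) * Real.exp (α * Elow ybar)) :
    ‖(∫ ω, X ω ∂P) - xα‖ ^ 2 ≤ (∫ ω, ‖X ω - (∫ ω', X ω' ∂P)‖ ^ 2 ∂P) / M :=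
  stmt8_general d1 d2 P α hα E Elow X ybar hX2 hlow hwint xα hxα M hM
end
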